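/- For the perturbation direction Δ*_3 ∈ L(𝔖_3^{fix}) with parameters x̄ = −2, ȳ = −5, ā = 1, b̄ = 4 (satisfying x̄ + 2ā = 0 and ȳ + ā + b̄ = 0), a real ε > 0 is g_{S_3}-valid (i.e., for every sample s ∈ S_3 and every ℓ, g_s^{(ℓ)}(C*_3 + εΔ*_3)·g_s^{(ℓ)}(C*_3) ≥ 0) if and only if ε ≤ 1/36. -/

import Mathlib

open Finset Filter

/-- Membership in the affine set 𝔖ₖ. -/
def inSk (k : ℕ) (C : Fin k → Matrix (Fin k) (Fin k) ℝ) : Prop :=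
  ∀ ℓ : Fin k,
    (∀ i : Fin k, i ≠ ℓ → ∑ j, C ℓ i j = 0) ∧
    (∀ j : Fin k, j ≠ ℓ → ∑ i, C ℓ i j = 0) ∧
    (∑ i, ∑ j, C ℓ i j = 1)

/-- A k-sample: nonempty subset of [k]×[k] with pairwise distinct second coordinates. -/
def IsSample {k : ℕ} (s : Finset (Fin k × Fin k)) : Prop :=
  s.Nonempty ∧ ∀ p ∈ s, ∀ q ∈ s, p ≠ q → p.2 ≠ q.2

/-- g_s^{(ℓ)}(C) -/
def gPart {k : ℕ} (s : Finset (Fin k × Fin k)) (C : Fin k → Matrix (Fin k) (Fin k) ℝ)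
    (ℓ : Fin k) : ℝ :=
  ∑ p ∈ s, C ℓ p.1 p.2

/-- g_s(C) -/
def gSample {k : ℕ} (s : Finset (Fin k × Fin k)) (C : Fin k → Matrix (Fin k) (Fin k) ℝ) : ℝ :=
  ∑ ℓ : Fin k, |gPart s C ℓ|

/-- g_{S_k}(C) : the maximum of g_s(C) over all k-samples s. -/
noncomputable def gMax (k : ℕ) (C : Fin k → Matrix (Fin k) (Fin k) ℝ) : ℝ :=
  ⨆ s : {s : Finset (Fin k × Fin k) // IsSample s}, gSample s.1 C

/-- multiplicity of ℓ in the multiset of coordinates of elements of s -/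
def mult {k : ℕ} (s : Finset (Fin k × Fin k)) (ℓ : Fin k) : ℕ :=
  (s.filter (fun p => p.1 = ℓ)).card + (s.filter (fun p => p.2 = ℓ)).card

/-- β(s): number of distinct indices among coordinates of s -/
def beta {k : ℕ} (s : Finset (Fin k × Fin k)) : ℕ :=
  (s.image Prod.fst ∪ s.image Prod.snd).card

/-- γ(s): number of diagonal elements of s -/
def gamma {k : ℕ} (s : Finset (Fin k × Fin k)) : ℕ :=
  (s.filter (fun p => p.1 = p.2)).card

/-- the strong homogeneous flow C*_k -/
noncomputable def Cstar (k : ℕ) : Fin k → Matrix (Fin k) (Fin k) ℝ :=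
  fun ℓ i j =>
    if i = ℓ ∧ j = ℓ then 2/(k:ℝ) - 1/(k:ℝ)^2
    else if i = ℓ ∨ j = ℓ then 1/(k:ℝ) - 1/(k:ℝ)^2
    else -1/(k:ℝ)^2

/-- the Sym(k)-invariant tuple with parameters x (i=j=ℓ), y (i=j≠ℓ),
a (exactly one of i,j equals ℓ), b (otherwise) -/
def Cfix (k : ℕ) (x y a b : ℝ) : Fin k → Matrix (Fin k) (Fin k) ℝ :=
  fun ℓ i j =>
    if i = ℓ ∧ j = ℓ then x
    else if i = j then y
    else if i = ℓ ∨ j = ℓ then a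
    else b

/-- The Sym(k)-action on tuples of matrices. -/
def permAct {k : ℕ} (σ : Equiv.Perm (Fin k)) (C : Fin k → Matrix (Fin k) (Fin k) ℝ) :
    Fin k → Matrix (Fin k) (Fin k) ℝ :=
  fun ℓ i j => C (σ⁻¹ ℓ) (σ⁻¹ i) (σ⁻¹ j)

/-- optimal value O_k -/
noncomputable def Ovalue (k : ℕ) : ℝ := sInf {y | ∃ C, inSk k C ∧ gMax k C = y}

/-- the perturbation direction Δ*₃: x̄ = −2, ȳ = −5, ā = 1, b̄ = 4 -/
def Dstar3 : Fin 3 → Matrix (Fin 3) (Fin 3) ℝ := Cfix 3 (-2) (-5) 1 4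

/-! The entries of `C*_k` depend only on how many coordinates of `(i, j)` equal `ℓ`, so
`g_s^{(ℓ)}(C*_k) = m_s(ℓ)/k - |s|/k²`; for `Δ*_3` one gets `4|s| - 3 m_s(ℓ) - 9 γ'`, where `γ'` counts
the diagonal entries of `s` other than `(ℓ, ℓ)`. Writing `g`, `δ` for these two values,
`(g + ε δ) g = (1 - 36 ε) g² + ε g (36 g + δ)` and `g (36 g + δ) = (3 m - |s|)(m - γ')`, which is
nonnegative for every sample since `|s| ≤ 3`. The singleton sample `{(0, 2)}` at `ℓ = 1`, where
`g = -1/9` and `δ = 4`, shows that `1/36` is sharp. -/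

def gammaNe {k : ℕ} (s : Finset (Fin k × Fin k)) (ℓ : Fin k) : ℕ :=
  (s.filter fun p => p.1 = p.2 ∧ p.1 ≠ ℓ).card

section gPart

variable {k : ℕ} (s : Finset (Fin k × Fin k)) (ℓ : Fin k)

theorem gPart_add_smul (C D : Fin k → Matrix (Fin k) (Fin k) ℝ) (ε : ℝ) :
    gPart s (C + ε • D) ℓ = gPart s C ℓ + ε * gPart s D ℓ := by
  simp only [gPart, Pi.add_apply, Pi.smul_apply, Matrix.add_apply, Matrix.smul_apply,
    smul_eq_mul, Finset.sum_add_distrib, Finset.mul_sum]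

theorem mult_eq_sum :
    (mult s ℓ : ℝ) = ∑ p ∈ s, ((if p.1 = ℓ then 1 else 0) + (if p.2 = ℓ then 1 else 0)) := by
  simp only [mult, Finset.card_filter, Finset.sum_add_distrib]
  push_cast
  rfl

theorem gammaNe_eq_sum :
    (gammaNe s ℓ : ℝ) = ∑ p ∈ s, (if p.1 = p.2 ∧ p.1 ≠ ℓ then 1 else 0) := by
  simp only [gammaNe, Finset.card_filter]
  push_cast
  rfl

theorem Cstar_apply (i j : Fin k) :
    Cstar k ℓ i j = ((if i = ℓ then 1 else 0) + (if j = ℓ then 1 else 0)) / k - 1 / (k : ℝ) ^ 2 := by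
  unfold Cstar
  by_cases hi : i = ℓ <;> by_cases hj : j = ℓ <;> simp [hi, hj] <;> ring

theorem gPart_Cstar : gPart s (Cstar k) ℓ = mult s ℓ / k - s.card / (k : ℝ) ^ 2 := by
  simp only [gPart, Cstar_apply, Finset.sum_sub_distrib, ← Finset.sum_div, mult_eq_sum,
    Finset.sum_const, nsmul_eq_mul, mul_one]

theorem Cfix_apply {x y a b : ℝ} (h : x + b = 2 * a) (i j : Fin k) :
    Cfix k x y a b ℓ i j = b + (a - b) * ((if i = ℓ then 1 else 0) + (if j = ℓ then 1 else 0)) +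
      (y - b) * (if i = j ∧ i ≠ ℓ then 1 else 0) := by
  unfold Cfix
  split_ifs <;> grind

theorem gPart_Cfix {x y a b : ℝ} (h : x + b = 2 * a) :
    gPart s (Cfix k x y a b) ℓ = b * s.card + (a - b) * mult s ℓ + (y - b) * gammaNe s ℓ := by
  simp only [gPart, Cfix_apply ℓ h, Finset.sum_add_distrib, ← Finset.mul_sum, mult_eq_sum,
    gammaNe_eq_sum, Finset.sum_const, nsmul_eq_mul, mul_comm b]

end gPart

theorem gPart_Dstar3 (s : Finset (Fin 3 × Fin 3)) (ℓ : Fin 3) :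
    gPart s Dstar3 ℓ = 4 * s.card - 3 * mult s ℓ - 9 * gammaNe s ℓ := by
  rw [Dstar3, gPart_Cfix s ℓ (by norm_num)]
  ring

theorem IsSample.card_le {k : ℕ} {s : Finset (Fin k × Fin k)} (hs : IsSample s) : s.card ≤ k := by
  simpa using Finset.card_le_card_of_injOn Prod.snd (fun _ _ => Finset.mem_univ _)
    fun p hp q hq hpq => by_contra fun hne => hs.2 p hp q hq hne hpq

theorem gammaNe_le_card {k : ℕ} (s : Finset (Fin k × Fin k)) (ℓ : Fin k) :
    gammaNe s ℓ ≤ s.card :=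
  Finset.card_filter_le _ _

theorem gammaNe_lt_card {k : ℕ} {s : Finset (Fin k × Fin k)} {ℓ : Fin k} (hm : mult s ℓ ≠ 0) :
    gammaNe s ℓ < s.card := by
  obtain ⟨p, hp, hpℓ⟩ : ∃ p ∈ s, p.1 = ℓ ∨ p.2 = ℓ := by
    by_contra! h
    simp_all [mult, Finset.filter_false_of_mem]
  refine Finset.card_lt_card (Finset.filter_ssubset.2 ⟨p, hp, ?_⟩)
  omega

theorem three_mul_sub_mul_sub_nonneg {n m d : ℕ} (hn : n ≤ 3) (hd : d ≤ n) (hm : m ≠ 0 → d < n) :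
    0 ≤ (3 * (m : ℝ) - n) * (m - d) := by
  rcases Nat.eq_zero_or_pos m with rfl | hm0
  · simp only [CharP.cast_eq_zero, mul_zero, zero_sub, neg_mul_neg]
    positivity
  have hd' := hm hm0.ne'
  rcases Nat.lt_or_ge d (m + 1) with hdm | hdm
  · have : (n : ℝ) ≤ 3 * m := by exact_mod_cast (by omega : n ≤ 3 * m)
    have : (d : ℝ) ≤ m := by exact_mod_cast (by omega : d ≤ m)
    nlinarith
  · obtain ⟨rfl, rfl⟩ : m = 1 ∧ n = 3 := by omega
    norm_num

theorem add_mul_mul_nonneg_of_le_one_div_36 {g δ ε : ℝ} (hε₀ : 0 ≤ ε) (hε : ε ≤ 1 / 36) (h : 0 ≤ g * (36 * g + δ)) :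
    0 ≤ (g + ε * δ) * g := by
  have hcoef : 0 ≤ 1 - 36 * ε := by linarith
  calc 0 ≤ (1 - 36 * ε) * g ^ 2 + ε * (g * (36 * g + δ)) := by positivity
    _ = (g + ε * δ) * g := by ring

theorem stmt19 (ε : ℝ) (hε : 0 < ε) :
    (∀ s : Finset (Fin 3 × Fin 3), IsSample s → ∀ ℓ : Fin 3,
      0 ≤ gPart s (Cstar 3 + ε • Dstar3) ℓ * gPart s (Cstar 3) ℓ) ↔ ε ≤ 1/36 := by
  refine ⟨fun h => ?_, fun hε36 s hs ℓ => ?_⟩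
  · have hsample : IsSample ({(0, 2)} : Finset (Fin 3 × Fin 3)) :=
      ⟨Finset.singleton_nonempty _, by simp⟩
    have hgap := h _ hsample 1
    have hmult : mult ({(0, 2)} : Finset (Fin 3 × Fin 3)) 1 = 0 := by decide
    have hgamma : gammaNe ({(0, 2)} : Finset (Fin 3 × Fin 3)) 1 = 0 := by decide
    rw [gPart_add_smul, gPart_Cstar, gPart_Dstar3, hmult, hgamma, Finset.card_singleton] at hgap
    norm_num at hgap
    linarith
  · rw [gPart_add_smul]
    refine add_mul_mul_nonneg_of_le_one_div_36 hε.le hε36 ?_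
    have key := three_mul_sub_mul_sub_nonneg hs.card_le (gammaNe_le_card s ℓ) gammaNe_lt_card
    rw [gPart_Cstar, gPart_Dstar3]
    push_cast
    linear_combination key
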